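/- arXiv:1612.03832 — 3 statements merged into one kernel-verified Lean document; each statement's English description precedes it below -/
import Mathlib

section
/- Let (M, Ω, θ) be an LCS manifold with dim M ≥ 4. If a vector field X satisfies L_X Ω = f_X Ω for a smooth function f_X, then θ(X) − f_X is a constant function on M. -/
/-- Let `(M, Ω, θ)` be an LCS manifold with `dim M ≥ 4`.  If a vector
field `X` satisfies `L_X Ω = f_X Ω` for a smooth function `f_X`, then `θ(X) − f_X`
is a constant function on `M`.  The Cartan calculus is axiomatised: `C` are smooth
functions, `V` vector fields, `O1, O2, O3` forms, with differentials, wedge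
products, evaluation `ev`, interior products `i2, i3` and the Lie derivative `L2`;
non-degeneracy of `Ω` in dimension `≥ 4` is expressed by injectivity of wedging
1-forms with `Ω`, connectedness by `hconst`. -/
theorem conformal_factor_of_lcs_automorphism_is_constant
    {C V O1 O2 O3 : Type*} [CommRing C] [Algebra ℝ C]
    [AddCommGroup V] [Module C V]
    [AddCommGroup O1] [Module C O1]
    [AddCommGroup O2] [Module C O2]
    [AddCommGroup O3] [Module C O3]
    (d0 : C →+ O1) (d1 : O1 →+ O2) (d2 : O2 →+ O3)
    (w11 : O1 →ₗ[C] O1 →ₗ[C] O2)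
    (w12 : O1 →ₗ[C] O2 →ₗ[C] O3)
    (w21 : O2 →ₗ[C] O1 →ₗ[C] O3)
    (ev : O1 →ₗ[C] V →ₗ[C] C)
    (i2 : O2 →ₗ[C] V →ₗ[C] O1) (i3 : O3 →ₗ[C] V →ₗ[C] O2)
    (L2 : V → O2 → O2)
    -- laws of calculus
    (hCartan : ∀ (Y : V) (ω : O2), L2 Y ω = d1 (i2 ω Y) + i3 (d2 ω) Y)
    (hi3w : ∀ (α : O1) (ω : O2) (Y : V),
      i3 (w12 α ω) Y = (ev α Y) • ω - w11 α (i2 ω Y))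
    (hLeib11 : ∀ α β : O1, d2 (w11 α β) = w21 (d1 α) β - w12 α (d1 β))
    (hLeib02 : ∀ (f : C) (ω : O2), d2 (f • ω) = w12 (d0 f) ω + f • d2 ω)
    (hd2d1 : ∀ α : O1, d2 (d1 α) = 0)
    -- the LCS structure
    (Ω : O2) (θ : O1)
    (hLee : d2 Ω = w12 θ Ω) (hθ : d1 θ = 0)
    (hθθ : ∀ α : O1, w12 θ (w11 θ α) = 0)
    (hnd4 : ∀ α : O1, w12 α Ω = 0 → α = 0)  -- non-degeneracy, dim ≥ 4
    (hconst : ∀ g : C, d0 g = 0 → ∃ c : ℝ, g = algebraMap ℝ C c)  -- connectedness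
    -- the conformal vector field
    (X : V) (fX : C) (hX : L2 X Ω = fX • Ω) :
    ∃ c : ℝ, ev θ X - fX = algebraMap ℝ C c := by
  set α : O1 := i2 Ω X with hα
  set g : C := fX - ev θ X with hg
  have h1 : d1 α = g • Ω + w11 θ α := by
    have h := hCartan X Ω
    rw [hX, hLee, hi3w] at h
    have : d1 α = fX • Ω - ((ev θ X) • Ω - w11 θ α) := by
      rw [eq_sub_iff_add_eq, ← h]
    rw [this, hg, sub_smul]; abel
  have h2 : d2 (d1 α) = w12 (d0 g) Ω := by
    rw [h1, map_add, hLeib02, hLeib11, hθ, map_zero, hLee]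
    have : w12 θ (d1 α) = g • w12 θ Ω := by
      rw [h1, map_add, map_smul, hθθ, add_zero]
    rw [this]
    simp
  have h3 : d0 g = 0 := by
    have := hnd4 (d0 g) (by rw [← h2, hd2d1])
    exact this
  obtain ⟨c, hc⟩ := hconst g h3
  refine ⟨-c, ?_⟩
  have : ev θ X - fX = -g := by rw [hg]; abel
  rw [this, hc, map_neg]
end

section
/- The map l : aut(M,[Ω]) → ℝ, X ↦ θ(X) − f_X (where L_X Ω = f_X Ω), is a Lie algebra morphism, i.e. l([X,Y]) = 0 for all conformal vector fields X, Y. -/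
/-- The map `l : aut(M,[Ω]) → ℝ`, `X ↦ θ(X) − f_X` (where
`L_X Ω = f_X Ω`), is a Lie algebra morphism into the abelian Lie algebra `ℝ`;
i.e. `l([X,Y]) = 0` for all conformal vector fields `X, Y`.  The Cartan calculus
is axiomatised; `hθclosed` expresses closedness of the Lee form `θ` evaluated on
vector fields, `hfaithful` the non-degeneracy of `Ω`. -/
theorem lee_morphism_vanishes_on_brackets
    {C V O2 : Type*} [CommRing C] [Algebra ℝ C]
    [LieRing V] [Module C V]
    [AddCommGroup O2] [Module C O2]
    (ev : V → C)  -- evaluation θ(·) of the Lee form on vector fields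
    (L0 : V → C → C) (L2 : V → O2 → O2)
    -- laws of calculus
    (hL0add : ∀ (Z : V) (a b : C), L0 Z (a + b) = L0 Z a + L0 Z b)
    (hL0const : ∀ (Z : V) (c : ℝ), L0 Z (algebraMap ℝ C c) = 0)
    (hLbr : ∀ (Z W : V) (ω : O2),
      L2 ⁅Z, W⁆ ω = L2 Z (L2 W ω) - L2 W (L2 Z ω))
    (hLsmul : ∀ (Z : V) (g : C) (ω : O2),
      L2 Z (g • ω) = (L0 Z g) • ω + g • L2 Z ω)
    -- closedness of θ, evaluated against vector fields
    (hθclosed : ∀ Z W : V, L0 Z (ev W) - L0 W (ev Z) = ev ⁅Z, W⁆)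
    -- the LCS form and its non-degeneracy
    (Ω : O2) (hfaithful : ∀ g : C, g • Ω = 0 → g = 0)
    -- the conformal vector fields and their constants
    (X Y : V) (fX fY : C)
    (hX : L2 X Ω = fX • Ω) (hY : L2 Y Ω = fY • Ω)
    (cX cY : ℝ)
    (hcX : ev X - fX = algebraMap ℝ C cX)
    (hcY : ev Y - fY = algebraMap ℝ C cY) :
    ∀ fB : C, L2 ⁅X, Y⁆ Ω = fB • Ω → ev ⁅X, Y⁆ - fB = 0 := by
  intro fB hB
  have key : L2 ⁅X, Y⁆ Ω = (L0 X fY - L0 Y fX) • Ω := by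
    rw [hLbr, hX, hY, hLsmul, hLsmul, hX, hY, sub_smul]
    module
  have hfb : fB = L0 X fY - L0 Y fX := by
    have := hfaithful (fB - (L0 X fY - L0 Y fX)) (by rw [sub_smul, ← hB, key, sub_self])
    linear_combination this
  have hevY : ev Y = fY + algebraMap ℝ C cY := by linear_combination hcY
  have hevX : ev X = fX + algebraMap ℝ C cX := by linear_combination hcX
  have h1 : L0 X (ev Y) = L0 X fY := by rw [hevY, hL0add, hL0const, add_zero]
  have h2 : L0 Y (ev X) = L0 Y fX := by rw [hevX, hL0add, hL0const, add_zero]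
  rw [← hθclosed, h1, h2, hfb, sub_self]
end

section
/- An LCS manifold (M, [Ω]) is d^θ-exact if and only if the Lie algebra morphism l : aut(M,[Ω]) → ℝ, l(X) = θ(X) − f_X, is surjective. More precisely: (1) if there exists a vector field B with L_B Ω = (θ(B) − 1)Ω, then Ω = d^θ(−ι_B Ω); (2) conversely, if Ω = dη − θ ∧ η for a 1-form η, then the vector field B defined by ι_B Ω = −η satisfies L_B Ω = (θ(B) − 1)Ω. -/
/-- An LCS manifold `(M,[Ω])` is `d^θ`-exact iff the Lie algebra
morphism `l : aut(M,[Ω]) → ℝ`, `l(X) = θ(X) − f_X`, is surjective.  Precisely: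
(1) if there is a vector field `B` with `L_B Ω = (θ(B) − 1) Ω`, then
`Ω = d^θ(−ι_B Ω)`; (2) conversely, if `Ω = dη − θ ∧ η` for a 1-form `η`, then
the vector field `B` defined by `ι_B Ω = −η` satisfies `L_B Ω = (θ(B) − 1) Ω`.
The Cartan calculus is axiomatised. -/
theorem lcs_exact_iff_lee_morphism_surjective
    {C V O1 O2 O3 : Type*} [CommRing C] [Algebra ℝ C]
    [AddCommGroup V] [Module C V]
    [AddCommGroup O1] [Module C O1]
    [AddCommGroup O2] [Module C O2]
    [AddCommGroup O3] [Module C O3]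
    (d1 : O1 →+ O2) (d2 : O2 →+ O3)
    (w11 : O1 →ₗ[C] O1 →ₗ[C] O2)
    (w12 : O1 →ₗ[C] O2 →ₗ[C] O3)
    (w21 : O2 →ₗ[C] O1 →ₗ[C] O3)
    (ev : O1 →ₗ[C] V →ₗ[C] C)
    (i2 : O2 →ₗ[C] V →ₗ[C] O1) (i3 : O3 →ₗ[C] V →ₗ[C] O2)
    (L2 : V → O2 → O2)
    -- laws of calculus
    (hCartan : ∀ (Y : V) (ω : O2), L2 Y ω = d1 (i2 ω Y) + i3 (d2 ω) Y)
    (hi3w : ∀ (α : O1) (ω : O2) (Y : V),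
      i3 (w12 α ω) Y = (ev α Y) • ω - w11 α (i2 ω Y))
    (hi2w : ∀ (α β : O1) (Y : V),
      i2 (w11 α β) Y = (ev α Y) • β - (ev β Y) • α)
    (hLeib11 : ∀ α β : O1, d2 (w11 α β) = w21 (d1 α) β - w12 α (d1 β))
    (hd2d1 : ∀ α : O1, d2 (d1 α) = 0)
    -- the LCS structure
    (Ω : O2) (θ : O1)
    (hLee : d2 Ω = w12 θ Ω) (hθ : d1 θ = 0) :
    (∀ B : V, L2 B Ω = (ev θ B - 1) • Ω →
      Ω = d1 (-(i2 Ω B)) - w11 θ (-(i2 Ω B))) ∧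
    (∀ (η : O1) (B : V), i2 Ω B = -η → Ω = d1 η - w11 θ η →
      L2 B Ω = (ev θ B - 1) • Ω) := by
  constructor
  · intro B hB
    rw [hCartan, hLee, hi3w] at hB
    rw [map_neg, map_neg]
    linear_combination (norm := module) hB
  · intro η B hη hΩ
    rw [hCartan, hLee, hi3w, hη, map_neg, map_neg]
    linear_combination (norm := module) hΩ
end
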